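/- Fix a natural number p ≥ 4, real numbers β₁, β₂, β₃ and complex numbers α₁, …, α₆ with |α₄| = |α₅| and |α₂|² − |α₁|² + 4(2p+1)|α₄|² < 0. Then for every α ∈ (0, 2p(|α₁|² − |α₂|² − 4(2p+1)|α₄|²)) there exist β ∈ [0, ∞) and N₀ ∈ ℤ₊ such that for every n ≥ N₀ and every x ∈ h_n: 2 Re⟨N^p x, N^p P_n G x⟩ + Σ_{k=1}^{6} ‖N^p P_n L_k x‖² ≤ −α ‖N^p x‖² + β (1 + ‖x‖²). -/

import Mathlib

/-!
For `x ∈ h_n` every term on the left is a finite sum over the levels `j ≤ n`, and summation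
by parts turns it into a diagonal form `Σ_j c(j) |x_j|²`: the cross terms of the drive
`iβ₁(a† − a)` are bounded by `|β₁| (|x_j|² + |x_{j+1}|²)`, and the truncation `P_n` only
drops nonnegative terms. The contributions of `L₃`, `L₆` cancel exactly against `G`, and for
`|α₄| = |α₅|` so do the contributions of order `j^{2p+1}` of `L₄`, `L₅`; a second-order
expansion of `(j ± 2)^{2p}` then gives
`c(j) = −2p(|α₁|² − |α₂|² − 4(2p+1)|α₄|²) j^{2p} + o(j^{2p})`.
Hence `c(j) + α j^{2p}` is eventually negative, so it is bounded above by some `β ≥ 0`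
(and `N₀ = 0` works).
-/

noncomputable section

namespace QOsc

/-- The annihilation operator `a` in coordinates: `a e_j = √j e_{j-1}`. -/
def ann (f : ℕ → ℂ) : ℕ → ℂ := fun j => (Real.sqrt (j + 1) : ℂ) * f (j + 1)

/-- The creation operator `a†` in coordinates: `a† e_j = √(j+1) e_{j+1}`. -/
def cre (f : ℕ → ℂ) : ℕ → ℂ := fun j => if j = 0 then 0 else (Real.sqrt j : ℂ) * f (j - 1)

/-- The number operator `N = a† a`. -/
def num (f : ℕ → ℂ) : ℕ → ℂ := fun j => (j : ℂ) * f j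

/-- The power `N^p` of the number operator. -/
def numPow (p : ℕ) (f : ℕ → ℂ) : ℕ → ℂ := fun j => (j : ℂ) ^ p * f j

/-- The orthogonal projection `P_n` onto the span `h_n` of `e_0, …, e_n`. -/
def proj (n : ℕ) (f : ℕ → ℂ) : ℕ → ℂ := fun j => if j ≤ n then f j else 0

/-- The inner product `⟨f, g⟩ = Σ_j conj (f_j) g_j` (linear in the second variable). -/
def innerSeq (f g : ℕ → ℂ) : ℂ := ∑' j : ℕ, (starRingEnd ℂ) (f j) * g j

/-- The squared norm `‖f‖² = Σ_j |f_j|²`. -/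
def normSq (f : ℕ → ℂ) : ℝ := ∑' j : ℕ, ‖f j‖ ^ 2

/-- The Hamiltonian `H = iβ₁(a† − a) + β₂ N + β₃ (a†)² a²`. -/
def Ham (b1 b2 b3 : ℝ) (f : ℕ → ℂ) : ℕ → ℂ :=
  (Complex.I * (b1 : ℂ)) • (cre f - ann f) + (b2 : ℂ) • num f
    + (b3 : ℂ) • cre (cre (ann (ann f)))

/-- The effective Hamiltonian
`G = −iH − ½(|α₁|² a† a + |α₂|² a a† + |α₃|² N² + |α₄|² (a†)² a² + |α₅|² a² (a†)² + |α₆|² N⁴)`. -/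
def Gop (b1 b2 b3 : ℝ) (a1 a2 a3 a4 a5 a6 : ℂ) (f : ℕ → ℂ) : ℕ → ℂ :=
  (-Complex.I) • Ham b1 b2 b3 f
    - (1 / 2 : ℂ) •
      (((‖a1‖ ^ 2 : ℝ) : ℂ) • cre (ann f) + ((‖a2‖ ^ 2 : ℝ) : ℂ) • ann (cre f)
        + ((‖a3‖ ^ 2 : ℝ) : ℂ) • num (num f)
        + ((‖a4‖ ^ 2 : ℝ) : ℂ) • cre (cre (ann (ann f)))
        + ((‖a5‖ ^ 2 : ℝ) : ℂ) • ann (ann (cre (cre f)))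
        + ((‖a6‖ ^ 2 : ℝ) : ℂ) • num (num (num (num f))))


open Finset Filter Asymptotics ComplexConjugate

lemma ofReal_sqrt_mul_self {r : ℝ} (hr : 0 ≤ r) : (√r : ℂ) * √r = r := by
  rw [← Complex.ofReal_mul, Real.mul_self_sqrt hr]

@[simp] lemma cre_zero (f : ℕ → ℂ) : cre f 0 = 0 := rfl

@[simp] lemma cre_succ (f : ℕ → ℂ) (j : ℕ) : cre f (j + 1) = √((j : ℝ) + 1) * f j := by
  simp [cre]

lemma ann_apply (f : ℕ → ℂ) (j : ℕ) : ann f j = √((j : ℝ) + 1) * f (j + 1) := rfl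

lemma cre_ann_apply (f : ℕ → ℂ) (j : ℕ) : cre (ann f) j = j * f j := by
  cases j with
  | zero => simp
  | succ j =>
    rw [cre_succ, ann_apply, ← mul_assoc, ofReal_sqrt_mul_self (by positivity)]
    push_cast; ring

lemma ann_cre_apply (f : ℕ → ℂ) (j : ℕ) : ann (cre f) j = (j + 1) * f j := by
  rw [ann_apply, cre_succ, ← mul_assoc, ofReal_sqrt_mul_self (by positivity)]
  push_cast; ring

lemma cre_cre_ann_ann_apply (f : ℕ → ℂ) (j : ℕ) :
    cre (cre (ann (ann f))) j = j * (j - 1) * f j := by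
  cases j with
  | zero => simp
  | succ j =>
    rw [cre_succ, cre_ann_apply, ann_apply]
    have h := ofReal_sqrt_mul_self (r := (j : ℝ) + 1) (by positivity)
    push_cast at h ⊢
    linear_combination (j * f (j + 1)) * h

lemma ann_ann_cre_cre_apply (f : ℕ → ℂ) (j : ℕ) :
    ann (ann (cre (cre f))) j = (j + 1) * (j + 2) * f j := by
  rw [ann_apply, ann_cre_apply, cre_succ]
  have h := ofReal_sqrt_mul_self (r := (j : ℝ) + 1) (by positivity)
  push_cast at h ⊢
  linear_combination ((j + 2) * f j) * h

lemma norm_sqrt_mul_sq {r : ℝ} (hr : 0 ≤ r) (z : ℂ) :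
    ‖(√r : ℂ) * z‖ ^ 2 = r * ‖z‖ ^ 2 := by
  rw [norm_mul, mul_pow, Complex.norm_real, Real.norm_of_nonneg (Real.sqrt_nonneg r),
    Real.sq_sqrt hr]

lemma norm_ann_apply_sq (f : ℕ → ℂ) (j : ℕ) :
    ‖ann f j‖ ^ 2 = (j + 1) * ‖f (j + 1)‖ ^ 2 :=
  norm_sqrt_mul_sq (by positivity) _

lemma norm_cre_succ_sq (f : ℕ → ℂ) (j : ℕ) :
    ‖cre f (j + 1)‖ ^ 2 = (j + 1) * ‖f j‖ ^ 2 := by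
  rw [cre_succ, norm_sqrt_mul_sq (by positivity)]

lemma norm_num_apply_sq (f : ℕ → ℂ) (j : ℕ) :
    ‖num f j‖ ^ 2 = (j : ℝ) ^ 2 * ‖f j‖ ^ 2 := by
  simp [num, mul_pow]

/-- The diagonal entry of `½ Σ_k L_k† L_k` at the level `x = j`. -/
def dissipDiag (a1 a2 a3 a4 a5 a6 : ℂ) (x : ℝ) : ℝ :=
  ‖a1‖ ^ 2 * x + ‖a2‖ ^ 2 * (x + 1) + ‖a3‖ ^ 2 * x ^ 2 + ‖a4‖ ^ 2 * (x * (x - 1))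
    + ‖a5‖ ^ 2 * ((x + 1) * (x + 2)) + ‖a6‖ ^ 2 * x ^ 4

lemma Gop_apply (b1 b2 b3 : ℝ) (a1 a2 a3 a4 a5 a6 : ℂ) (f : ℕ → ℂ) (j : ℕ) :
    Gop b1 b2 b3 a1 a2 a3 a4 a5 a6 f j = b1 * (cre f j - ann f j)
      - Complex.I * ((b2 * j + b3 * (j * (j - 1)) : ℝ) : ℂ) * f j
      - (dissipDiag a1 a2 a3 a4 a5 a6 j : ℂ) / 2
        * f j := by
  simp only [Gop, Ham, dissipDiag, Pi.add_apply, Pi.sub_apply, Pi.smul_apply, smul_eq_mul,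
    cre_ann_apply, ann_cre_apply, cre_cre_ann_ann_apply, ann_ann_cre_cre_apply, num]
  push_cast
  linear_combination (-(b1 : ℂ) * (cre f j - ann f j)) * Complex.I_mul_I

lemma re_conj_mul_Gop (b1 b2 b3 : ℝ) (a1 a2 a3 a4 a5 a6 : ℂ) (f : ℕ → ℂ) (j : ℕ) :
    (conj (f j) * Gop b1 b2 b3 a1 a2 a3 a4 a5 a6 f j).re
      = b1 * (conj (f j) * (cre f j - ann f j)).re
        - dissipDiag a1 a2 a3 a4 a5 a6 j / 2
          * ‖f j‖ ^ 2 := by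
  rw [Gop_apply, mul_sub, mul_sub, mul_left_comm, mul_left_comm _ _ (f j), Complex.conj_mul',
    mul_left_comm _ _ (f j), Complex.conj_mul', ← Complex.ofReal_pow]
  simp only [Complex.sub_re, Complex.mul_re, Complex.I_re, Complex.I_im,
    Complex.ofReal_re, Complex.ofReal_im, Complex.div_ofNat_re]
  ring

lemma sum_range_shift_eq {M : Type*} [AddCommMonoid M] {F : ℕ → M} {s m : ℕ}
    (hlow : ∀ j < s, F j = 0) (hhigh : ∀ j, m ≤ j → F j = 0) :
    ∑ j ∈ range m, F (j + s) = ∑ j ∈ range m, F j := by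
  have h1 := sum_range_add F s m
  have h2 := sum_range_add F m s
  rw [sum_eq_zero fun j hj => hlow j (mem_range.1 hj), zero_add] at h1
  rw [sum_eq_zero fun j _ => hhigh _ (Nat.le_add_right _ _), add_zero, add_comm m s] at h2
  simpa only [add_comm _ s] using h1.symm.trans h2

lemma sum_range_le_sum_range_shift {F : ℕ → ℝ} {s m : ℕ} (hF : ∀ j, 0 ≤ F j)
    (hlow : ∀ j < s, F j = 0) : ∑ j ∈ range m, F j ≤ ∑ j ∈ range m, F (j + s) := by
  calc ∑ j ∈ range m, F j ≤ ∑ j ∈ range (s + m), F j :=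
        sum_le_sum_of_subset_of_nonneg (range_subset_range.2 (Nat.le_add_left _ _))
          fun j _ _ => hF j
    _ = ∑ j ∈ range m, F (j + s) := by
        rw [sum_range_add, sum_eq_zero fun j hj => hlow j (mem_range.1 hj), zero_add]
        simp only [add_comm s]

lemma normSq_eq_sum_range {f : ℕ → ℂ} {n : ℕ} (hf : ∀ j, n < j → f j = 0) :
    normSq f = ∑ j ∈ range (n + 1), ‖f j‖ ^ 2 :=
  tsum_eq_sum fun j hj => by
    rw [hf j (by simpa [Nat.lt_succ_iff] using hj), norm_zero, zero_pow two_ne_zero]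

lemma innerSeq_eq_sum_range {f : ℕ → ℂ} {n : ℕ} (hf : ∀ j, n < j → f j = 0)
    (g : ℕ → ℂ) :
    innerSeq f g = ∑ j ∈ range (n + 1), conj (f j) * g j :=
  tsum_eq_sum fun j hj => by rw [hf j (by simpa [Nat.lt_succ_iff] using hj), map_zero, zero_mul]

lemma numPow_proj_of_lt (p : ℕ) {n j : ℕ} (f : ℕ → ℂ) (hj : n < j) :
    numPow p (proj n f) j = 0 := by
  simp [numPow, proj, hj.not_ge]

lemma proj_eq_self {n : ℕ} {f : ℕ → ℂ} (hf : ∀ j, n < j → f j = 0) : proj n f = f :=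
  funext fun j => by by_cases hj : j ≤ n <;> simp [proj, hj, hf j (not_le.1 _)]

lemma normSq_numPow_proj (p n : ℕ) (f : ℕ → ℂ) :
    normSq (numPow p (proj n f))
      = ∑ j ∈ range (n + 1), (j : ℝ) ^ (2 * p) * ‖f j‖ ^ 2 := by
  rw [normSq_eq_sum_range fun j => numPow_proj_of_lt p f]
  refine sum_congr rfl fun j hj => ?_
  rw [numPow, proj, if_pos (Nat.lt_succ_iff.1 (mem_range.1 hj)), norm_mul, mul_pow, norm_pow,
    Complex.norm_natCast, ← pow_mul, mul_comm p 2]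

section WeightedSums

variable {n : ℕ} {x : ℕ → ℂ} (p : ℕ) (a : ℂ)

lemma normSq_numPow_proj_ann (hx : ∀ j, n < j → x j = 0) :
    normSq (numPow p (proj n (a • ann x)))
      = ∑ j ∈ range (n + 1), ‖a‖ ^ 2 * j * ((j : ℝ) - 1) ^ (2 * p) * ‖x j‖ ^ 2 := by
  rw [normSq_numPow_proj]
  refine (sum_congr rfl fun j _ => ?_).trans (sum_range_shift_eq (s := 1)
    (fun j hj => by simp [Nat.lt_one_iff.1 hj]) fun j hj => by simp [hx j hj])
  rw [Pi.smul_apply, smul_eq_mul, norm_mul, mul_pow, norm_ann_apply_sq]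
  push_cast; ring

lemma normSq_numPow_proj_cre_le :
    normSq (numPow p (proj n (a • cre x)))
      ≤ ∑ j ∈ range (n + 1),
          ‖a‖ ^ 2 * (j + 1) * ((j : ℝ) + 1) ^ (2 * p) * ‖x j‖ ^ 2 := by
  rw [normSq_numPow_proj]
  refine (sum_range_le_sum_range_shift (s := 1) (fun j => by positivity)
    fun j hj => by simp [Nat.lt_one_iff.1 hj]).trans_eq (sum_congr rfl fun j _ => ?_)
  rw [Pi.smul_apply, smul_eq_mul, norm_mul, mul_pow, norm_cre_succ_sq]
  push_cast; ring

lemma normSq_numPow_proj_num :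
    normSq (numPow p (proj n (a • num x)))
      = ∑ j ∈ range (n + 1),
          ‖a‖ ^ 2 * (j : ℝ) ^ 2 * (j : ℝ) ^ (2 * p) * ‖x j‖ ^ 2 := by
  rw [normSq_numPow_proj]
  refine sum_congr rfl fun j _ => ?_
  rw [Pi.smul_apply, smul_eq_mul, norm_mul, mul_pow, norm_num_apply_sq]
  ring

lemma normSq_numPow_proj_ann_ann (hx : ∀ j, n < j → x j = 0) :
    normSq (numPow p (proj n (a • ann (ann x))))
      = ∑ j ∈ range (n + 1),
          ‖a‖ ^ 2 * (j * (j - 1)) * ((j : ℝ) - 2) ^ (2 * p) * ‖x j‖ ^ 2 := by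
  rw [normSq_numPow_proj]
  refine (sum_congr rfl fun j _ => ?_).trans (sum_range_shift_eq (s := 2)
    (fun j hj => by interval_cases j <;> simp) fun j hj => by simp [hx j (by omega)])
  rw [Pi.smul_apply, smul_eq_mul, norm_mul, mul_pow, norm_ann_apply_sq, norm_ann_apply_sq]
  push_cast; ring

lemma normSq_numPow_proj_cre_cre_le :
    normSq (numPow p (proj n (a • cre (cre x))))
      ≤ ∑ j ∈ range (n + 1),
          ‖a‖ ^ 2 * ((j + 1) * (j + 2)) * ((j : ℝ) + 2) ^ (2 * p) * ‖x j‖ ^ 2 := by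
  rw [normSq_numPow_proj]
  refine (sum_range_le_sum_range_shift (s := 2) (fun j => by positivity)
    fun j hj => by interval_cases j <;> simp [cre]).trans_eq (sum_congr rfl fun j _ => ?_)
  rw [Pi.smul_apply, smul_eq_mul, norm_mul, mul_pow, norm_cre_succ_sq, norm_cre_succ_sq]
  push_cast; ring

lemma normSq_numPow_proj_num_num :
    normSq (numPow p (proj n (a • num (num x))))
      = ∑ j ∈ range (n + 1),
          ‖a‖ ^ 2 * (j : ℝ) ^ 4 * (j : ℝ) ^ (2 * p) * ‖x j‖ ^ 2 := by
  rw [normSq_numPow_proj]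
  refine sum_congr rfl fun j _ => ?_
  rw [Pi.smul_apply, smul_eq_mul, norm_mul, mul_pow, norm_num_apply_sq, norm_num_apply_sq]
  ring

end WeightedSums

lemma re_conj_mul_comm (z w : ℂ) : (conj w * z).re = (conj z * w).re := by
  rw [← Complex.conj_re, map_mul, Complex.conj_conj, mul_comm]

lemma two_mul_re_conj_mul_le (b : ℝ) (z w : ℂ) :
    2 * b * (conj z * w).re ≤ |b| * (‖z‖ ^ 2 + ‖w‖ ^ 2) := by
  have hre : |(conj z * w).re| ≤ ‖z‖ * ‖w‖ :=
    (Complex.abs_re_le_norm _).trans (by rw [norm_mul, Complex.norm_conj])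
  have hb : b * (conj z * w).re ≤ |b| * (‖z‖ * ‖w‖) :=
    (le_abs_self _).trans (by rw [abs_mul]; exact mul_le_mul_of_nonneg_left hre (abs_nonneg b))
  nlinarith [abs_nonneg b, mul_nonneg (abs_nonneg b) (sq_nonneg (‖z‖ - ‖w‖))]

/-- Summation by parts turns the drive `iβ₁(a† − a)` into the difference of weights
`(j + 1)^q − j^q` between neighbouring levels. -/
lemma sum_re_conj_mul_cre_sub_ann {n : ℕ} {x : ℕ → ℂ} (q : ℕ)
    (hx : ∀ j, n < j → x j = 0) :
    ∑ j ∈ range (n + 1), (j : ℝ) ^ q * (conj (x j) * (cre x j - ann x j)).re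
      = ∑ j ∈ range (n + 1),
          √((j : ℝ) + 1) * (((j : ℝ) + 1) ^ q - (j : ℝ) ^ q)
            * (conj (x j) * x (j + 1)).re := by
  have hcre : ∑ j ∈ range (n + 1), (j : ℝ) ^ q * (conj (x j) * cre x j).re
      = ∑ j ∈ range (n + 1),
          ((j : ℝ) + 1) ^ q * √((j : ℝ) + 1) * (conj (x j) * x (j + 1)).re := by
    refine (sum_range_shift_eq (s := 1) (fun j hj => by simp [Nat.lt_one_iff.1 hj])
      fun j hj => by simp [hx j hj]).symm.trans (sum_congr rfl fun j _ => ?_)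
    rw [cre_succ, mul_left_comm, Complex.re_ofReal_mul, re_conj_mul_comm]
    push_cast; ring
  calc ∑ j ∈ range (n + 1), (j : ℝ) ^ q * (conj (x j) * (cre x j - ann x j)).re
      = ∑ j ∈ range (n + 1), (j : ℝ) ^ q * (conj (x j) * cre x j).re
        - ∑ j ∈ range (n + 1), (j : ℝ) ^ q * (conj (x j) * ann x j).re := by
        rw [← sum_sub_distrib]
        exact sum_congr rfl fun j _ => by rw [mul_sub, Complex.sub_re, mul_sub]
    _ = _ := by
        rw [hcre, ← sum_sub_distrib]
        refine sum_congr rfl fun j _ => ?_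
        rw [ann_apply, mul_left_comm, Complex.re_ofReal_mul]
        ring

lemma two_mul_sum_re_conj_mul_cre_sub_ann_le {n : ℕ} {x : ℕ → ℂ} (q : ℕ) (b : ℝ)
    (hx : ∀ j, n < j → x j = 0) :
    2 * b * ∑ j ∈ range (n + 1), (j : ℝ) ^ q * (conj (x j) * (cre x j - ann x j)).re
      ≤ |b| * ∑ j ∈ range (n + 1), (√((j : ℝ) + 1) * (((j : ℝ) + 1) ^ q - (j : ℝ) ^ q)
          + √(j : ℝ) * ((j : ℝ) ^ q - ((j : ℝ) - 1) ^ q)) * ‖x j‖ ^ 2 := by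
  set w : ℕ → ℝ := fun j => √((j : ℝ) + 1) * (((j : ℝ) + 1) ^ q - (j : ℝ) ^ q)
  have hw : ∀ j, 0 ≤ w j := fun j => mul_nonneg (Real.sqrt_nonneg _)
    (sub_nonneg.2 (pow_le_pow_left₀ j.cast_nonneg (le_add_of_nonneg_right zero_le_one) q))
  have hshift : ∑ j ∈ range (n + 1), w j * ‖x (j + 1)‖ ^ 2
      = ∑ j ∈ range (n + 1),
          √(j : ℝ) * ((j : ℝ) ^ q - ((j : ℝ) - 1) ^ q) * ‖x j‖ ^ 2 :=
    (sum_congr rfl fun j _ => by simp only [w]; push_cast; ring).trans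
      (sum_range_shift_eq (s := 1) (fun j hj => by simp [Nat.lt_one_iff.1 hj])
        fun j hj => by simp [hx j hj])
  calc 2 * b * ∑ j ∈ range (n + 1), (j : ℝ) ^ q * (conj (x j) * (cre x j - ann x j)).re
      = ∑ j ∈ range (n + 1), w j * (2 * b * (conj (x j) * x (j + 1)).re) := by
        rw [sum_re_conj_mul_cre_sub_ann q hx, mul_sum]
        exact sum_congr rfl fun j _ => by ring
    _ ≤ ∑ j ∈ range (n + 1), w j * (|b| * (‖x j‖ ^ 2 + ‖x (j + 1)‖ ^ 2)) :=
        sum_le_sum fun j _ => mul_le_mul_of_nonneg_left (two_mul_re_conj_mul_le _ _ _) (hw j)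
    _ = |b| * (∑ j ∈ range (n + 1), w j * ‖x j‖ ^ 2
          + ∑ j ∈ range (n + 1), w j * ‖x (j + 1)‖ ^ 2) := by
        rw [← sum_add_distrib, mul_sum]
        exact sum_congr rfl fun j _ => by ring
    _ = _ := by
        rw [hshift, ← sum_add_distrib]
        exact congrArg _ (sum_congr rfl fun j _ => by ring)

lemma two_re_innerSeq_numPow_Gop {n : ℕ} {x : ℕ → ℂ} (p : ℕ) (b1 b2 b3 : ℝ)
    (a1 a2 a3 a4 a5 a6 : ℂ) (hx : ∀ j, n < j → x j = 0) :
    2 * (innerSeq (numPow p x) (numPow p (proj n (Gop b1 b2 b3 a1 a2 a3 a4 a5 a6 x)))).re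
      = 2 * b1 * ∑ j ∈ range (n + 1),
          (j : ℝ) ^ (2 * p) * (conj (x j) * (cre x j - ann x j)).re
        - ∑ j ∈ range (n + 1), (j : ℝ) ^ (2 * p) * dissipDiag a1 a2 a3 a4 a5 a6 j * ‖x j‖ ^ 2 := by
  rw [innerSeq_eq_sum_range (n := n) (fun j hj => by simp [numPow, hx j hj]), Complex.re_sum,
    mul_sum, mul_sum, ← sum_sub_distrib]
  refine sum_congr rfl fun j hj => ?_
  have hconj : conj (numPow p x j) * numPow p (proj n (Gop b1 b2 b3 a1 a2 a3 a4 a5 a6 x)) j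
      = ((j : ℝ) ^ (2 * p) : ℝ) * (conj (x j) * Gop b1 b2 b3 a1 a2 a3 a4 a5 a6 x j) := by
    rw [numPow, numPow, proj, if_pos (Nat.lt_succ_iff.1 (mem_range.1 hj)), map_mul, map_pow,
      Complex.conj_natCast]
    push_cast; ring
  rw [hconj, Complex.re_ofReal_mul, re_conj_mul_Gop]
  ring

lemma isBigO_pow_pow_atTop_of_le {k l : ℕ} (h : k ≤ l) :
    (fun x : ℝ => x ^ k) =O[atTop] (fun x => x ^ l) := by
  rcases h.lt_or_eq with h | rfl
  · exact (isLittleO_pow_pow_atTop_of_lt h).isBigO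
  · exact isBigO_refl _ _

lemma _root_.Asymptotics.IsBigO.mul_pow_atTop {f g : ℝ → ℝ} {i k : ℕ}
    (hg : g =O[atTop] (· ^ i)) (hf : f =O[atTop] (· ^ k)) :
    (fun x => g x * f x) =O[atTop] (· ^ (i + k)) := by
  simpa only [pow_add] using hg.mul hf

lemma isBigO_add_const_atTop (a : ℝ) : (fun x : ℝ => x + a) =O[atTop] (· ^ 1) := by
  simpa only [pow_one] using (isBigO_refl (fun x : ℝ => x) atTop).add
    (isLittleO_const_id_atTop a).isBigO

lemma isLittleO_sqrt_add_atTop (a : ℝ) : (fun x : ℝ => √(x + a)) =o[atTop] (fun x => x) := by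
  have h : (fun x : ℝ => x + a) =o[atTop] (fun x => x ^ 2) :=
    (isBigO_add_const_atTop a).trans_isLittleO (isLittleO_pow_pow_atTop_of_lt one_lt_two)
  have := h.sqrt (Eventually.of_forall fun x => sq_nonneg x)
  simp only [Real.sqrt_sq_eq_abs] at this
  exact isLittleO_abs_right.mp this

def taylorRem (m : ℕ) (d x : ℝ) : ℝ :=
  (x + d) ^ (m + 3)
    - (x ^ (m + 3) + (m + 3) * d * x ^ (m + 2) + (m + 3) * (m + 2) / 2 * d ^ 2 * x ^ (m + 1))

lemma taylorRem_isBigO (d : ℝ) (m : ℕ) : taylorRem m d =O[atTop] (· ^ m) := by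
  induction m with
  | zero =>
    have h : taylorRem 0 d = fun _ => d ^ 3 := by funext x; simp only [taylorRem]; push_cast; ring
    rw [h]
    simpa only [pow_zero] using
      isBigO_const_const (d ^ 3) (one_ne_zero (α := ℝ)) (atTop : Filter ℝ)
  | succ m ih =>
    have h : taylorRem (m + 1) d = fun x =>
        (x + d) * taylorRem m d x + (m + 3) * (m + 2) / 2 * d ^ 3 * x ^ (m + 1) := by
      funext x; simp only [taylorRem]; push_cast; ring
    rw [h]
    have := (isBigO_add_const_atTop d).mul_pow_atTop ih
    rw [add_comm 1 m] at this
    exact this.add ((isBigO_refl _ _).const_mul_left _)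

lemma pow_mul_taylorRem_isBigO (d : ℝ) (m : ℕ) {i : ℕ} (hi : i ≤ 2) :
    (fun x => x ^ i * taylorRem m d x) =O[atTop] (· ^ (m + 2)) :=
  ((isBigO_refl _ _).mul_pow_atTop (taylorRem_isBigO d m)).trans
    (isBigO_pow_pow_atTop_of_le (by omega))

lemma const_mul_pow_isBigO (c : ℝ) {k l : ℕ} (h : k ≤ l) :
    (fun x : ℝ => c * x ^ k) =O[atTop] (· ^ l) :=
  (isBigO_pow_pow_atTop_of_le h).const_mul_left c

lemma add_pow_sub_pow_isBigO (d : ℝ) (m : ℕ) :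
    (fun x : ℝ => (x + d) ^ (m + 3) - x ^ (m + 3)) =O[atTop] (· ^ (m + 2)) := by
  have h : (fun x : ℝ => (x + d) ^ (m + 3) - x ^ (m + 3)) = fun x =>
      (m + 3) * d * x ^ (m + 2) + (m + 3) * (m + 2) / 2 * d ^ 2 * x ^ (m + 1)
        + x ^ 0 * taylorRem m d x := by
    funext x; simp only [taylorRem]; ring
  rw [h]
  exact ((const_mul_pow_isBigO _ le_rfl).add (const_mul_pow_isBigO _ (by omega))).add
    (pow_mul_taylorRem_isBigO d m (by omega))

lemma mul_sub_one_pow_sub_pow_isBigO (m : ℕ) :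
    (fun x : ℝ => x * ((x - 1) ^ (m + 3) - x ^ (m + 3)) + (m + 3) * x ^ (m + 3))
      =O[atTop] (· ^ (m + 2)) := by
  have h : (fun x : ℝ => x * ((x - 1) ^ (m + 3) - x ^ (m + 3)) + (m + 3) * x ^ (m + 3)) =
      fun x => (m + 3) * (m + 2) / 2 * x ^ (m + 2) + x ^ 1 * taylorRem m (-1) x := by
    funext x; simp only [taylorRem]; ring
  rw [h]
  exact (const_mul_pow_isBigO _ le_rfl).add (pow_mul_taylorRem_isBigO _ m (by omega))

lemma add_one_mul_add_one_pow_sub_pow_isBigO (m : ℕ) :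
    (fun x : ℝ => (x + 1) * ((x + 1) ^ (m + 3) - x ^ (m + 3)) - (m + 3) * x ^ (m + 3))
      =O[atTop] (· ^ (m + 2)) := by
  have h : (fun x : ℝ => (x + 1) * ((x + 1) ^ (m + 3) - x ^ (m + 3)) - (m + 3) * x ^ (m + 3)) =
      fun x => (m + 3) * (m + 4) / 2 * x ^ (m + 2) + (m + 3) * (m + 2) / 2 * x ^ (m + 1)
        + x ^ 1 * taylorRem m 1 x + x ^ 0 * taylorRem m 1 x := by
    funext x; simp only [taylorRem]; ring
  rw [h]
  exact (((const_mul_pow_isBigO _ le_rfl).add (const_mul_pow_isBigO _ (by omega))).add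
    (pow_mul_taylorRem_isBigO _ m (by omega))).add (pow_mul_taylorRem_isBigO _ m (by omega))

lemma sub_two_add_two_pow_sub_pow_isBigO (m : ℕ) :
    (fun x : ℝ => x * (x - 1) * ((x - 2) ^ (m + 3) - x ^ (m + 3))
        + (x + 1) * (x + 2) * ((x + 2) ^ (m + 3) - x ^ (m + 3))
        - 4 * (m + 3) * (m + 4) * x ^ (m + 3)) =O[atTop] (· ^ (m + 2)) := by
  have h : (fun x : ℝ => x * (x - 1) * ((x - 2) ^ (m + 3) - x ^ (m + 3))
        + (x + 1) * (x + 2) * ((x + 2) ^ (m + 3) - x ^ (m + 3))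
        - 4 * (m + 3) * (m + 4) * x ^ (m + 3)) =
      fun x => 4 * (m + 3) ^ 2 * x ^ (m + 2) + 4 * (m + 3) * (m + 2) * x ^ (m + 1)
        + x ^ 2 * taylorRem m (-2) x - x ^ 1 * taylorRem m (-2) x
        + x ^ 2 * taylorRem m 2 x + 3 * (x ^ 1 * taylorRem m 2 x)
        + 2 * (x ^ 0 * taylorRem m 2 x) := by
    funext x; simp only [taylorRem]; ring
  rw [h]
  have hR (d : ℝ) {i : ℕ} (hi : i ≤ 2) := pow_mul_taylorRem_isBigO d m hi
  exact (((((((const_mul_pow_isBigO _ le_rfl).add (const_mul_pow_isBigO _ (by omega))).add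
    (hR _ le_rfl)).sub (hR _ (by omega))).add (hR _ le_rfl)).add
    ((hR _ (by omega)).const_mul_left _)).add ((hR _ (by omega)).const_mul_left _))

lemma sqrt_mul_add_pow_sub_pow_isLittleO (m : ℕ) :
    (fun x : ℝ => √(x + 1) * ((x + 1) ^ (m + 3) - x ^ (m + 3))
        + √x * (x ^ (m + 3) - (x - 1) ^ (m + 3))) =o[atTop] (· ^ (m + 3)) := by
  have h1 := (isLittleO_sqrt_add_atTop 1).mul_isBigO (add_pow_sub_pow_isBigO 1 m)
  have h2 := (isLittleO_sqrt_add_atTop 0).mul_isBigO (add_pow_sub_pow_isBigO (-1) m).neg_left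
  simp only [add_zero, ← pow_succ', ← sub_eq_add_neg, neg_sub] at h1 h2
  exact h1.add h2

/-- The coefficient of `|x_j|²` in the Lyapunov bound at `x = j`, with `A_k = |α_k|²` and
`B = |β₁|`. The factors `x`, `x (x - 1)` and `√x` vanish exactly at the levels `j` for which the
level `j - 1` or `j - 2` they refer to does not exist. -/
def lyapCoeff (q : ℕ) (A1 A2 A4 A5 B x : ℝ) : ℝ :=
  A1 * x * ((x - 1) ^ q - x ^ q) + A2 * (x + 1) * ((x + 1) ^ q - x ^ q)
    + A4 * (x * (x - 1)) * ((x - 2) ^ q - x ^ q)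
    + A5 * ((x + 1) * (x + 2)) * ((x + 2) ^ q - x ^ q)
    + B * (√(x + 1) * ((x + 1) ^ q - x ^ q) + √x * (x ^ q - (x - 1) ^ q))

lemma lyapCoeff_add_isLittleO (m : ℕ) (A1 A2 A4 B : ℝ) :
    (fun x => lyapCoeff (m + 3) A1 A2 A4 A4 B x
        + (m + 3) * (A1 - A2 - 4 * (m + 4) * A4) * x ^ (m + 3)) =o[atTop] (· ^ (m + 3)) := by
  have h : (fun x => lyapCoeff (m + 3) A1 A2 A4 A4 B x
      + (m + 3) * (A1 - A2 - 4 * (m + 4) * A4) * x ^ (m + 3)) = fun x =>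
      A1 * (x * ((x - 1) ^ (m + 3) - x ^ (m + 3)) + (m + 3) * x ^ (m + 3))
      + A2 * ((x + 1) * ((x + 1) ^ (m + 3) - x ^ (m + 3)) - (m + 3) * x ^ (m + 3))
      + A4 * (x * (x - 1) * ((x - 2) ^ (m + 3) - x ^ (m + 3))
        + (x + 1) * (x + 2) * ((x + 2) ^ (m + 3) - x ^ (m + 3))
        - 4 * (m + 3) * (m + 4) * x ^ (m + 3))
      + B * (√(x + 1) * ((x + 1) ^ (m + 3) - x ^ (m + 3))
        + √x * (x ^ (m + 3) - (x - 1) ^ (m + 3))) := by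
    funext x; simp only [lyapCoeff]; ring
  have hlt : (fun x : ℝ => x ^ (m + 2)) =o[atTop] (· ^ (m + 3)) :=
    isLittleO_pow_pow_atTop_of_lt (by omega)
  rw [h]
  exact ((((mul_sub_one_pow_sub_pow_isBigO m).trans_isLittleO hlt).const_mul_left A1).add
    (((add_one_mul_add_one_pow_sub_pow_isBigO m).trans_isLittleO hlt).const_mul_left A2)).add
    (((sub_two_add_two_pow_sub_pow_isBigO m).trans_isLittleO hlt).const_mul_left A4) |>.add
    ((sqrt_mul_add_pow_sub_pow_isLittleO m).const_mul_left B)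

lemma exists_nonneg_forall_le_of_eventually_le {u : ℕ → ℝ}
    (h : ∀ᶠ j in atTop, u j ≤ 0) :
    ∃ be, 0 ≤ be ∧ ∀ j, u j ≤ be := by
  obtain ⟨b, hb⟩ := (isBoundedUnder_of_eventually_le h).bddAbove_range
  exact ⟨max b 0, le_max_right _ _, fun j => (hb ⟨j, rfl⟩).trans (le_max_left _ _)⟩

lemma exists_lyapCoeff_le (m : ℕ) {A1 A2 A4 B al : ℝ}
    (hal : al < (m + 3) * (A1 - A2 - 4 * (m + 4) * A4)) :
    ∃ be, 0 ≤ be ∧ ∀ j : ℕ,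
      lyapCoeff (m + 3) A1 A2 A4 A4 B j ≤ -al * (j : ℝ) ^ (m + 3) + be := by
  have hbound : ∀ᶠ x : ℝ in atTop,
      lyapCoeff (m + 3) A1 A2 A4 A4 B x + al * x ^ (m + 3) ≤ 0 := by
    filter_upwards [(lyapCoeff_add_isLittleO m A1 A2 A4 B).def (sub_pos.2 hal),
      eventually_ge_atTop 0] with x hx hx0
    rw [Real.norm_of_nonneg (pow_nonneg hx0 _), Real.norm_eq_abs] at hx
    linarith [le_abs_self (lyapCoeff (m + 3) A1 A2 A4 A4 B x
      + (m + 3) * (A1 - A2 - 4 * (m + 4) * A4) * x ^ (m + 3))]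
  obtain ⟨be, hbe, hle⟩ := exists_nonneg_forall_le_of_eventually_le
    (tendsto_natCast_atTop_atTop.eventually hbound)
  exact ⟨be, hbe, fun j => by linarith [hle j]⟩

lemma lyapunov_lhs_le_sum_lyapCoeff (p n : ℕ) (b1 b2 b3 : ℝ) (a1 a2 a3 a4 a5 a6 : ℂ)
    (x : ℕ → ℂ) (hx : ∀ j, n < j → x j = 0) :
    2 * (innerSeq (numPow p x) (numPow p (proj n (Gop b1 b2 b3 a1 a2 a3 a4 a5 a6 x)))).re
      + (normSq (numPow p (proj n (a1 • ann x)))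
        + normSq (numPow p (proj n (a2 • cre x)))
        + normSq (numPow p (proj n (a3 • num x)))
        + normSq (numPow p (proj n (a4 • ann (ann x))))
        + normSq (numPow p (proj n (a5 • cre (cre x))))
        + normSq (numPow p (proj n (a6 • num (num x)))))
      ≤ ∑ j ∈ range (n + 1),
          lyapCoeff (2 * p) (‖a1‖ ^ 2) (‖a2‖ ^ 2) (‖a4‖ ^ 2) (‖a5‖ ^ 2) |b1| j
            * ‖x j‖ ^ 2 := by
  rw [two_re_innerSeq_numPow_Gop p b1 b2 b3 a1 a2 a3 a4 a5 a6 hx, normSq_numPow_proj_ann p a1 hx,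
    normSq_numPow_proj_num p a3, normSq_numPow_proj_ann_ann p a4 hx,
    normSq_numPow_proj_num_num p a6]
  calc _ ≤ |b1| * ∑ j ∈ range (n + 1),
            (√((j : ℝ) + 1) * (((j : ℝ) + 1) ^ (2 * p) - (j : ℝ) ^ (2 * p))
              + √(j : ℝ) * ((j : ℝ) ^ (2 * p) - ((j : ℝ) - 1) ^ (2 * p))) * ‖x j‖ ^ 2
        - ∑ j ∈ range (n + 1), (j : ℝ) ^ (2 * p) * dissipDiag a1 a2 a3 a4 a5 a6 j * ‖x j‖ ^ 2
        + (∑ j ∈ range (n + 1), ‖a1‖ ^ 2 * j * ((j : ℝ) - 1) ^ (2 * p) * ‖x j‖ ^ 2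
          + ∑ j ∈ range (n + 1),
              ‖a2‖ ^ 2 * (j + 1) * ((j : ℝ) + 1) ^ (2 * p) * ‖x j‖ ^ 2
          + ∑ j ∈ range (n + 1),
              ‖a3‖ ^ 2 * (j : ℝ) ^ 2 * (j : ℝ) ^ (2 * p) * ‖x j‖ ^ 2
          + ∑ j ∈ range (n + 1),
              ‖a4‖ ^ 2 * (j * (j - 1)) * ((j : ℝ) - 2) ^ (2 * p) * ‖x j‖ ^ 2
          + ∑ j ∈ range (n + 1),
              ‖a5‖ ^ 2 * ((j + 1) * (j + 2)) * ((j : ℝ) + 2) ^ (2 * p) * ‖x j‖ ^ 2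
          + ∑ j ∈ range (n + 1),
              ‖a6‖ ^ 2 * (j : ℝ) ^ 4 * (j : ℝ) ^ (2 * p) * ‖x j‖ ^ 2) := by
        gcongr ?_ - _ + (_ + ?_ + _ + _ + ?_ + _)
        · exact two_mul_sum_re_conj_mul_cre_sub_ann_le (2 * p) b1 hx
        · exact normSq_numPow_proj_cre_le p a2
        · exact normSq_numPow_proj_cre_cre_le p a5
    _ = _ := by
        rw [mul_sum]
        simp only [← sum_add_distrib, ← sum_sub_distrib]
        exact sum_congr rfl fun j _ => by simp only [lyapCoeff, dissipDiag]; ring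

theorem stmt12_general (p : ℕ) (hp : 4 ≤ p) (b1 b2 b3 : ℝ) (a1 a2 a3 a4 a5 a6 : ℂ)
    (ha : ‖a4‖ = ‖a5‖) :
    ∀ al : ℝ, 0 < al → al < 2 * p * (‖a1‖ ^ 2 - ‖a2‖ ^ 2 - 4 * (2 * p + 1) * ‖a4‖ ^ 2) →
      ∃ be : ℝ, 0 ≤ be ∧ ∃ N₀ : ℕ,
        ∀ n : ℕ, N₀ ≤ n → ∀ x : ℕ → ℂ, (∀ j, n < j → x j = 0) →
          2 * (innerSeq (numPow p x)
                (numPow p (proj n (Gop b1 b2 b3 a1 a2 a3 a4 a5 a6 x)))).re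
            + (normSq (numPow p (proj n (a1 • ann x)))
              + normSq (numPow p (proj n (a2 • cre x)))
              + normSq (numPow p (proj n (a3 • num x)))
              + normSq (numPow p (proj n (a4 • ann (ann x))))
              + normSq (numPow p (proj n (a5 • cre (cre x))))
              + normSq (numPow p (proj n (a6 • num (num x)))))
            ≤ -al * normSq (numPow p x) + be * (1 + normSq x) := by
  intro al _ hal
  obtain ⟨m, hm⟩ : ∃ m, 2 * p = m + 3 := ⟨2 * p - 3, by omega⟩
  have hmR : (m : ℝ) + 3 = 2 * p := by exact_mod_cast hm.symm
  obtain ⟨be, hbe, hle⟩ := exists_lyapCoeff_le m (A1 := ‖a1‖ ^ 2) (A2 := ‖a2‖ ^ 2)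
    (A4 := ‖a4‖ ^ 2) (B := |b1|) (al := al)
    (by rwa [hmR, show (m : ℝ) + 4 = 2 * p + 1 by linarith])
  refine ⟨be, hbe, 0, fun n _ x hx => ?_⟩
  calc _ ≤ ∑ j ∈ range (n + 1),
          lyapCoeff (2 * p) (‖a1‖ ^ 2) (‖a2‖ ^ 2) (‖a4‖ ^ 2) (‖a5‖ ^ 2) |b1| j
            * ‖x j‖ ^ 2 :=
        lyapunov_lhs_le_sum_lyapCoeff p n b1 b2 b3 a1 a2 a3 a4 a5 a6 x hx
    _ ≤ ∑ j ∈ range (n + 1), (-al * (j : ℝ) ^ (2 * p) + be) * ‖x j‖ ^ 2 := by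
        gcongr with j
        rw [← ha, hm]
        exact hle j
    _ = -al * normSq (numPow p (proj n x)) + be * normSq x := by
        rw [normSq_numPow_proj, normSq_eq_sum_range hx, mul_sum, mul_sum, ← sum_add_distrib]
        exact sum_congr rfl fun j _ => by ring
    _ ≤ _ := by
        rw [proj_eq_self hx]
        linarith

/-- the Lyapunov condition (H3.3) for `(N^p, √α N^p)` in the proof of
Theorem 8, degenerate case `|α₄| = |α₅|` with `|α₂|² − |α₁|² + 4(2p+1)|α₄|² < 0`. For
`p ≥ 4` and every `α ∈ (0, 2p(|α₁|² − |α₂|² − 4(2p+1)|α₄|²))` there are `β ≥ 0` and `N₀` with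
`2 Re⟨N^p x, N^p Pₙ G x⟩ + Σ_{k=1}^{6} ‖N^p Pₙ L_k x‖² ≤ −α ‖N^p x‖² + β(1 + ‖x‖²)`
for all `n ≥ N₀` and all `x ∈ h_n`. -/
theorem stmt12 (p : ℕ) (hp : 4 ≤ p) (b1 b2 b3 : ℝ) (a1 a2 a3 a4 a5 a6 : ℂ)
    (ha : ‖a4‖ = ‖a5‖)
    (ha' : ‖a2‖ ^ 2 - ‖a1‖ ^ 2 + 4 * (2 * p + 1) * ‖a4‖ ^ 2 < 0) :
    ∀ al : ℝ, 0 < al → al < 2 * p * (‖a1‖ ^ 2 - ‖a2‖ ^ 2 - 4 * (2 * p + 1) * ‖a4‖ ^ 2) →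
      ∃ be : ℝ, 0 ≤ be ∧ ∃ N₀ : ℕ,
        ∀ n : ℕ, N₀ ≤ n → ∀ x : ℕ → ℂ, (∀ j, n < j → x j = 0) →
          2 * (innerSeq (numPow p x)
                (numPow p (proj n (Gop b1 b2 b3 a1 a2 a3 a4 a5 a6 x)))).re
            + (normSq (numPow p (proj n (a1 • ann x)))
              + normSq (numPow p (proj n (a2 • cre x)))
              + normSq (numPow p (proj n (a3 • num x)))
              + normSq (numPow p (proj n (a4 • ann (ann x))))
              + normSq (numPow p (proj n (a5 • cre (cre x))))
              + normSq (numPow p (proj n (a6 • num (num x)))))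
            ≤ -al * normSq (numPow p x) + be * (1 + normSq x) :=
  stmt12_general p hp b1 b2 b3 a1 a2 a3 a4 a5 a6 ha

end QOsc
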